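/- Let ρ > 0, p₁ = (x₁, y₁) ∈ ℝ² with d₁₂ := ‖p₁‖ ≥ 2ρ, and d₂₃ ≥ 2ρ with p₃ = (d₂₃, 0). Define the SR arrival-path length D₁(θ) = ρ(φ₁(θ) − θ − π) + L₁(θ) with L₁(θ) = √(d₁₂² − 2ρ(x₁ sin θ − y₁ cos θ)) and φ₁(θ) = atan2(y₁ + ρ cos θ, x₁ − ρ sin θ) + arctan(ρ / L₁(θ)), and the RS departure-path length D₂(θ) = ρ(θ − φ₂(θ)) + L₂(θ) with L₂(θ) = √(d₂₃² − 2 d₂₃ ρ sin θ) and φ₂(θ) = atan2(ρ cos θ, d₂₃ − ρ sin θ) − arctan(ρ / L₂(θ)). Set τ₁(θ) = φ₁(θ) − θ − π and τ₂(θ) = θ − φ₂(θ). Then on any open interval where L₁ > 0, L₂ > 0, τ₁(θ) ∈ (0, 2π) and τ₂(θ) ∈ (0, 2π), the total length G(θ) = D₁(θ) + D₂(θ) is differentiable with G′(θ) = ρ(cos τ₁(θ) − cos τ₂(θ)); if moreover θ is a point of this interval with G′(θ) = 0 and τ₁(θ) + τ₂(θ) ≠ 2π, then τ₁(θ) = τ₂(θ),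 i.e., the angle of turn in the curved segment from p₁ to the origin equals the angle of turn in the curved segment from the origin to p₃. -/

import Mathlib

/-- Four-quadrant arctangent: `atan2 y x` is the argument of the complex number `x + y i`. -/
noncomputable def atan2 (y x : ℝ) : ℝ := Complex.arg ⟨x, y⟩

/-- Tangent-segment length of the SR Dubins path from `p₁ = (x₁, y₁)` to the origin
arriving with heading `θ`: `L₁(θ) = √(d₁₂² − 2ρ(x₁ sin θ − y₁ cos θ))`. -/
noncomputable def Lsr (ρ x₁ y₁ θ : ℝ) : ℝ :=
  Real.sqrt (Real.sqrt (x₁ ^ 2 + y₁ ^ 2) ^ 2 - 2 * ρ * (x₁ * Real.sin θ - y₁ * Real.cos θ))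

/-- Heading along the straight segment of the SR path (reversed LS path):
`φ₁(θ) = atan2(y₁ + ρ cos θ, x₁ − ρ sin θ) + arctan(ρ / L₁(θ))`. -/
noncomputable def φsr (ρ x₁ y₁ θ : ℝ) : ℝ :=
  atan2 (y₁ + ρ * Real.cos θ) (x₁ - ρ * Real.sin θ) + Real.arctan (ρ / Lsr ρ x₁ y₁ θ)

/-- SR arrival-path length `D₁(θ) = ρ(φ₁(θ) − θ − π) + L₁(θ)`. -/
noncomputable def Dsr (ρ x₁ y₁ θ : ℝ) : ℝ :=
  ρ * (φsr ρ x₁ y₁ θ - θ - Real.pi) + Lsr ρ x₁ y₁ θ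

/-- Tangent-segment length of the RS Dubins path from the origin with heading `θ`
to `p₃ = (d₂₃, 0)`: `L₂(θ) = √(d₂₃² − 2 d₂₃ ρ sin θ)`. -/
noncomputable def Lrs (ρ d₂₃ θ : ℝ) : ℝ :=
  Real.sqrt (d₂₃ ^ 2 - 2 * d₂₃ * ρ * Real.sin θ)

/-- Heading along the straight segment of the RS departure path:
`φ₂(θ) = atan2(ρ cos θ, d₂₃ − ρ sin θ) − arctan(ρ / L₂(θ))`. -/
noncomputable def φrs (ρ d₂₃ θ : ℝ) : ℝ :=
  atan2 (ρ * Real.cos θ) (d₂₃ - ρ * Real.sin θ) - Real.arctan (ρ / Lrs ρ d₂₃ θ)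

/-- RS departure-path length `D₂(θ) = ρ(θ − φ₂(θ)) + L₂(θ)`. -/
noncomputable def Drs (ρ d₂₃ θ : ℝ) : ℝ :=
  ρ * (θ - φrs ρ d₂₃ θ) + Lrs ρ d₂₃ θ

/-- Total SRS path length from `p₁` through the origin to `p₃` as a function of the
heading `θ` at the middle point: `G(θ) = D₁(θ) + D₂(θ)`. -/
noncomputable def Gsrs (ρ x₁ y₁ d₂₃ θ : ℝ) : ℝ :=
  Dsr ρ x₁ y₁ θ + Drs ρ d₂₃ θ

/-!
The two halves of the path have the same shape. With `c(θ) = (ρ sin θ, -ρ cos θ)` the centre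
of the turning circle and `p` the outer point, the straight segment is the tangent from `p` to
that circle: its length is `L = √(|p - c|² - ρ²)` and its heading is
`φ = arg (p - c) + arctan (σ / L)` with `σ = ρ` (arrival) or `σ = -ρ` (departure). A direct
computation gives `(σ φ + L)' = -ρ cos (φ - θ)`, hence `G' = ρ (cos τ₁ - cos τ₂)`. The bounds
`τ ∈ (0, 2π)` keep `arg` away from a jump, which is what makes `φ` differentiable even when
`p - c` crosses the negative real axis. At a critical point `cos τ₁ = cos τ₂` with both angles
in `(0, 2π)`, so `τ₁ = τ₂` or `τ₁ + τ₂ = 2π`.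
-/

open Real Filter Topology Set
open Complex (arg normSq I imCLM)

theorem Real.Angle.eq_of_coe_eq_of_mem_Ico {x y c : ℝ} (h : (x : Angle) = y)
    (hx : x ∈ Ico c (c + 2 * π)) (hy : y ∈ Ico c (c + 2 * π)) : x = y := by
  obtain ⟨k, hk⟩ := Angle.angle_eq_iff_two_pi_dvd_sub.1 h.symm
  rw [← (toIcoMod_eq_self two_pi_pos).2 hx, ← (toIcoMod_eq_self two_pi_pos).2 hy]
  exact (toIcoMod_eq_toIcoMod _).2 ⟨k, by rw [hk, zsmul_eq_mul, mul_comm]⟩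

theorem HasDerivAt.arg_of_eventually_add_mem_Ioo {z : ℝ → ℂ} {z' : ℂ} {g : ℝ → ℝ} {θ c : ℝ}
    (hz : HasDerivAt z z' θ) (hz0 : z θ ≠ 0) (hg : ContinuousAt g θ)
    (h : ∀ᶠ t in 𝓝 θ, arg (z t) + g t ∈ Ioo c (c + 2 * π)) :
    HasDerivAt (fun t => arg (z t)) (z' / z θ).im θ := by
  -- `arg ∘ z` differs from this smooth lift by multiples of `2π`, which the window rules out.
  set lift : ℝ → ℝ := fun t => arg (z t / z θ) + arg (z θ) with hlift_def
  have hlog : HasDerivAt (fun t => Complex.log (z t / z θ)) (z' / z θ / (z θ / z θ)) θ :=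
    (hz.div_const _).clog_real (by simp [div_self hz0])
  have hlift : HasDerivAt lift (z' / z θ).im θ := by
    have harg : HasDerivAt (fun t => arg (z t / z θ)) (z' / z θ).im θ := by
      simpa [div_self hz0, Function.comp_def, Complex.log_im] using
        imCLM.hasFDerivAt.comp_hasDerivAt θ hlog
    exact harg.add_const _
  have hlift_mem : ∀ᶠ t in 𝓝 θ, lift t + g t ∈ Ioo c (c + 2 * π) := by
    have hθ : lift θ + g θ = arg (z θ) + g θ := by simp [lift, div_self hz0]
    exact (hlift.continuousAt.add hg).eventually_mem
      (Ioo_mem_nhds (by simpa [hθ] using h.self_of_nhds.1) (by simpa [hθ] using h.self_of_nhds.2))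
  refine hlift.congr_of_eventuallyEq ?_
  filter_upwards [h, hlift_mem, hz.continuousAt.eventually_ne hz0] with t ht hlt hzt
  have hangle : ((arg (z t) + g t : ℝ) : Angle) = (lift t + g t : ℝ) := by
    rw [Angle.coe_add, Angle.coe_add, hlift_def, Angle.coe_add,
      ← Complex.arg_mul_coe_angle (div_ne_zero hzt hz0) hz0, div_mul_cancel₀ _ hz0]
  have := Angle.eq_of_coe_eq_of_mem_Ico hangle (Ioo_subset_Ico_self ht) (Ioo_subset_Ico_self hlt)
  linarith

theorem Real.cos_arg_add_arctan_sub {z : ℂ} {L σ θ : ℝ} (hL : 0 < L)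
    (hz : ‖z‖ = √(L ^ 2 + σ ^ 2)) :
    cos (arg z + arctan (σ / L) - θ) =
      ((z.re * cos θ + z.im * sin θ) * L - (z.im * cos θ - z.re * sin θ) * σ) /
        (L ^ 2 + σ ^ 2) := by
  have hr : √(1 + (σ / L) ^ 2) = √(L ^ 2 + σ ^ 2) / L := by
    rw [← sqrt_sq hL.le, ← sqrt_div' _ (sq_nonneg L), sqrt_sq hL.le]
    congr 1; field_simp
  have hz0 : z ≠ 0 := by rw [← norm_ne_zero_iff, hz]; positivity
  have hr2 := sq_sqrt (by positivity : 0 ≤ L ^ 2 + σ ^ 2)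
  rw [add_sub_right_comm, cos_add, cos_sub, sin_sub, Complex.cos_arg hz0, Complex.sin_arg,
    cos_arctan, sin_arctan, hr, hz]
  field_simp
  rw [hr2]

section TangentToTurningCircle

/-- The vector from the centre `(ρ sin t, -ρ cos t)` of the turning circle to `(px, py)`. -/
noncomputable def centerToPoint (ρ px py t : ℝ) : ℂ := ⟨px - ρ * sin t, py + ρ * cos t⟩

noncomputable def tangentLen (ρ px py t : ℝ) : ℝ :=
  √(px ^ 2 + py ^ 2 - 2 * ρ * (px * sin t - py * cos t))

noncomputable def tangentHeading (σ ρ px py t : ℝ) : ℝ :=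
  arg (centerToPoint ρ px py t) + arctan (σ / tangentLen ρ px py t)

variable {σ ρ px py θ : ℝ}

theorem norm_centerToPoint (h : 0 < tangentLen ρ px py θ) :
    ‖centerToPoint ρ px py θ‖ = √(tangentLen ρ px py θ ^ 2 + ρ ^ 2) := by
  rw [centerToPoint, Complex.norm_def, Complex.normSq_mk, tangentLen, sq_sqrt (sqrt_pos.1 h).le]
  congr 1
  linear_combination ρ ^ 2 * sin_sq_add_cos_sq θ

theorem hasDerivAt_centerToPoint :
    HasDerivAt (centerToPoint ρ px py) ⟨-(ρ * cos θ), -(ρ * sin θ)⟩ θ := by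
  have hre := ((hasDerivAt_sin θ).const_mul ρ).const_sub px |>.ofReal_comp
  have him := ((hasDerivAt_cos θ).const_mul ρ).const_add py |>.ofReal_comp
  have hfun : centerToPoint ρ px py =
      fun t => ((px - ρ * sin t : ℝ) : ℂ) + (py + ρ * cos t : ℝ) * I := by
    funext t; exact Complex.mk_eq_add_mul_I _ _
  rw [hfun, Complex.mk_eq_add_mul_I]
  refine (hre.add (him.mul_const I)).congr_deriv ?_
  push_cast; ring

theorem hasDerivAt_tangentLen (h : 0 < tangentLen ρ px py θ) :
    HasDerivAt (tangentLen ρ px py)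
      (-(ρ * (px * cos θ + py * sin θ)) / tangentLen ρ px py θ) θ := by
  have hin : HasDerivAt (fun t => px ^ 2 + py ^ 2 - 2 * ρ * (px * sin t - py * cos t))
      (-(2 * ρ * (px * cos θ + py * sin θ))) θ := by
    refine ((((hasDerivAt_sin θ).const_mul px).sub ((hasDerivAt_cos θ).const_mul py)).const_mul
      (2 * ρ) |>.const_sub (px ^ 2 + py ^ 2)).congr_deriv ?_
    ring
  refine (hin.sqrt (sqrt_pos.1 h).ne').congr_deriv ?_
  rw [tangentLen]
  field_simp

theorem hasDerivAt_tangentHeading (hσ : σ ^ 2 = ρ ^ 2) (h : 0 < tangentLen ρ px py θ) {c : ℝ}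
    (hmem : ∀ᶠ t in 𝓝 θ, tangentHeading σ ρ px py t - t ∈ Ioo c (c + 2 * π)) :
    HasDerivAt (fun t => σ * tangentHeading σ ρ px py t + tangentLen ρ px py t)
      (-(ρ * cos (tangentHeading σ ρ px py θ - θ))) θ := by
  have hL := hasDerivAt_tangentLen h
  have hnorm : ‖centerToPoint ρ px py θ‖ = √(tangentLen ρ px py θ ^ 2 + σ ^ 2) := by
    rw [hσ, norm_centerToPoint h]
  have hnormSq : normSq (centerToPoint ρ px py θ) = tangentLen ρ px py θ ^ 2 + ρ ^ 2 := by
    rw [← hσ, Complex.normSq_eq_norm_sq, hnorm, sq_sqrt (by positivity)]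
  have hz0 : centerToPoint ρ px py θ ≠ 0 := by
    rw [← Complex.normSq_pos, hnormSq]; positivity
  have hquot : ContinuousAt (fun t => σ / tangentLen ρ px py t) θ :=
    continuousAt_const.div hL.continuousAt h.ne'
  have hg : ContinuousAt (fun t => arctan (σ / tangentLen ρ px py t) - t) θ :=
    (continuousAt_arctan.comp hquot).sub continuousAt_id
  have harg := hasDerivAt_centerToPoint.arg_of_eventually_add_mem_Ioo hz0 hg
    (by simpa only [tangentHeading, add_sub_assoc] using hmem)
  have hatan := ((hasDerivAt_const θ σ).fun_div hL h.ne').arctan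
  refine (((harg.add hatan).const_mul σ).add hL).congr_deriv ?_
  rw [tangentHeading, cos_arg_add_arctan_sub h hnorm, Complex.div_im, hnormSq, hσ]
  simp only [centerToPoint]
  field_simp
  rw [hσ]
  linear_combination ρ * (px * cos θ + py * sin θ) * (tangentLen ρ px py θ ^ 2 + ρ ^ 2) * hσ

end TangentToTurningCircle

theorem Real.eq_of_cos_eq_of_mem_Ioo {u v : ℝ} (hu : u ∈ Ioo 0 (2 * π)) (hv : v ∈ Ioo 0 (2 * π))
    (hcos : cos u = cos v) (hsum : u + v ≠ 2 * π) : u = v := by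
  have hu' : u ∈ Ico 0 (0 + 2 * π) := by rw [zero_add]; exact Ioo_subset_Ico_self hu
  rcases Angle.cos_eq_iff_coe_eq_or_eq_neg.1 hcos with h | h
  · exact Angle.eq_of_coe_eq_of_mem_Ico h hu' (by rw [zero_add]; exact Ioo_subset_Ico_self hv)
  · have h' : (u : Angle) = (2 * π - v : ℝ) := by rw [h, Angle.coe_sub, Angle.coe_two_pi, zero_sub]
    have := Angle.eq_of_coe_eq_of_mem_Ico h' hu' (by constructor <;> linarith [hv.1, hv.2])
    exact absurd (by linarith) hsum

theorem Lsr_eq_tangentLen (ρ x₁ y₁ : ℝ) : Lsr ρ x₁ y₁ = tangentLen ρ x₁ y₁ := by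
  funext t
  rw [Lsr, tangentLen, sq_sqrt (by positivity)]

theorem Lrs_eq_tangentLen (ρ d₂₃ : ℝ) : Lrs ρ d₂₃ = tangentLen ρ d₂₃ 0 := by
  funext t
  rw [Lrs, tangentLen]
  ring_nf

theorem φsr_eq_tangentHeading (ρ x₁ y₁ : ℝ) : φsr ρ x₁ y₁ = tangentHeading ρ ρ x₁ y₁ := by
  funext t
  rw [φsr, Lsr_eq_tangentLen]
  rfl

theorem φrs_eq_tangentHeading (ρ d₂₃ : ℝ) : φrs ρ d₂₃ = tangentHeading (-ρ) ρ d₂₃ 0 := by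
  funext t
  rw [φrs, tangentHeading, centerToPoint, Lrs_eq_tangentLen, zero_add, neg_div, arctan_neg,
    sub_eq_add_neg]
  rfl

theorem hasDerivAt_Dsr {ρ x₁ y₁ θ : ℝ} (hL : 0 < Lsr ρ x₁ y₁ θ)
    (hτ : ∀ᶠ t in 𝓝 θ, φsr ρ x₁ y₁ t - t - π ∈ Ioo 0 (2 * π)) :
    HasDerivAt (Dsr ρ x₁ y₁) (ρ * cos (φsr ρ x₁ y₁ θ - θ - π) - ρ) θ := by
  rw [Lsr_eq_tangentLen] at hL
  rw [φsr_eq_tangentHeading] at hτ ⊢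
  have hmem : ∀ᶠ t in 𝓝 θ, tangentHeading ρ ρ x₁ y₁ t - t ∈ Ioo π (π + 2 * π) := by
    filter_upwards [hτ] with t ht
    constructor <;> linarith [ht.1, ht.2]
  have hD : Dsr ρ x₁ y₁ = fun t =>
      ρ * tangentHeading ρ ρ x₁ y₁ t + tangentLen ρ x₁ y₁ t - ρ * t - ρ * π := by
    funext t
    rw [Dsr, φsr_eq_tangentHeading, Lsr_eq_tangentLen]
    ring
  rw [hD]
  refine (((hasDerivAt_tangentHeading rfl hL hmem).sub ((hasDerivAt_id' θ).const_mul ρ)).sub_const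
    (ρ * π)).congr_deriv ?_
  rw [cos_sub_pi]
  ring

theorem hasDerivAt_Drs {ρ d₂₃ θ : ℝ} (hL : 0 < Lrs ρ d₂₃ θ)
    (hτ : ∀ᶠ t in 𝓝 θ, t - φrs ρ d₂₃ t ∈ Ioo 0 (2 * π)) :
    HasDerivAt (Drs ρ d₂₃) (ρ - ρ * cos (θ - φrs ρ d₂₃ θ)) θ := by
  rw [Lrs_eq_tangentLen] at hL
  rw [φrs_eq_tangentHeading] at hτ ⊢
  have hmem : ∀ᶠ t in 𝓝 θ,
      tangentHeading (-ρ) ρ d₂₃ 0 t - t ∈ Ioo (-(2 * π)) (-(2 * π) + 2 * π) := by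
    filter_upwards [hτ] with t ht
    constructor <;> linarith [ht.1, ht.2]
  have hD : Drs ρ d₂₃ = fun t =>
      ρ * t + (-ρ * tangentHeading (-ρ) ρ d₂₃ 0 t + tangentLen ρ d₂₃ 0 t) := by
    funext t
    rw [Drs, φrs_eq_tangentHeading, Lrs_eq_tangentLen]
    ring
  rw [hD]
  refine (((hasDerivAt_id' θ).const_mul ρ).add
    (hasDerivAt_tangentHeading (by ring) hL hmem)).congr_deriv ?_
  rw [← cos_neg, neg_sub]
  ring

theorem stmt9_general (ρ x₁ y₁ d₂₃ a b : ℝ) (hρ : 0 < ρ)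
    (hL1 : ∀ θ ∈ Set.Ioo a b, 0 < Lsr ρ x₁ y₁ θ)
    (hL2 : ∀ θ ∈ Set.Ioo a b, 0 < Lrs ρ d₂₃ θ)
    (hτ1 : ∀ θ ∈ Set.Ioo a b, φsr ρ x₁ y₁ θ - θ - Real.pi ∈ Set.Ioo 0 (2 * Real.pi))
    (hτ2 : ∀ θ ∈ Set.Ioo a b, θ - φrs ρ d₂₃ θ ∈ Set.Ioo 0 (2 * Real.pi)) :
    (∀ θ ∈ Set.Ioo a b,
      HasDerivAt (Gsrs ρ x₁ y₁ d₂₃)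
        (ρ * (Real.cos (φsr ρ x₁ y₁ θ - θ - Real.pi) - Real.cos (θ - φrs ρ d₂₃ θ))) θ)
    ∧ ∀ θ ∈ Set.Ioo a b,
        deriv (Gsrs ρ x₁ y₁ d₂₃) θ = 0 →
        (φsr ρ x₁ y₁ θ - θ - Real.pi) + (θ - φrs ρ d₂₃ θ) ≠ 2 * Real.pi →
        φsr ρ x₁ y₁ θ - θ - Real.pi = θ - φrs ρ d₂₃ θ := by
  have hG : ∀ θ ∈ Ioo a b, HasDerivAt (Gsrs ρ x₁ y₁ d₂₃)
      (ρ * (cos (φsr ρ x₁ y₁ θ - θ - π) - cos (θ - φrs ρ d₂₃ θ))) θ := by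
    intro θ hθ
    have hnhds : Ioo a b ∈ 𝓝 θ := Ioo_mem_nhds hθ.1 hθ.2
    have h := (hasDerivAt_Dsr (hL1 θ hθ) (eventually_of_mem hnhds hτ1)).add
      (hasDerivAt_Drs (hL2 θ hθ) (eventually_of_mem hnhds hτ2))
    exact h.congr_deriv (by ring)
  refine ⟨hG, fun θ hθ hcrit hsum => ?_⟩
  have hcos : ρ * (cos (φsr ρ x₁ y₁ θ - θ - π) - cos (θ - φrs ρ d₂₃ θ)) = 0 :=
    (hG θ hθ).deriv ▸ hcrit
  exact eq_of_cos_eq_of_mem_Ioo (hτ1 θ hθ) (hτ2 θ hθ)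
    (sub_eq_zero.1 ((mul_eq_zero.1 hcos).resolve_left hρ.ne')) hsum

theorem stmt9 (ρ x₁ y₁ d₂₃ a b : ℝ) (hρ : 0 < ρ)
    (hd12 : 2 * ρ ≤ Real.sqrt (x₁ ^ 2 + y₁ ^ 2)) (hd23 : 2 * ρ ≤ d₂₃)
    (hL1 : ∀ θ ∈ Set.Ioo a b, 0 < Lsr ρ x₁ y₁ θ)
    (hL2 : ∀ θ ∈ Set.Ioo a b, 0 < Lrs ρ d₂₃ θ)
    (hτ1 : ∀ θ ∈ Set.Ioo a b, φsr ρ x₁ y₁ θ - θ - Real.pi ∈ Set.Ioo 0 (2 * Real.pi))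
    (hτ2 : ∀ θ ∈ Set.Ioo a b, θ - φrs ρ d₂₃ θ ∈ Set.Ioo 0 (2 * Real.pi)) :
    (∀ θ ∈ Set.Ioo a b,
      HasDerivAt (Gsrs ρ x₁ y₁ d₂₃)
        (ρ * (Real.cos (φsr ρ x₁ y₁ θ - θ - Real.pi) - Real.cos (θ - φrs ρ d₂₃ θ))) θ)
    ∧ ∀ θ ∈ Set.Ioo a b,
        deriv (Gsrs ρ x₁ y₁ d₂₃) θ = 0 →
        (φsr ρ x₁ y₁ θ - θ - Real.pi) + (θ - φrs ρ d₂₃ θ) ≠ 2 * Real.pi →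
        φsr ρ x₁ y₁ θ - θ - Real.pi = θ - φrs ρ d₂₃ θ :=
  stmt9_general ρ x₁ y₁ d₂₃ a b hρ hL1 hL2 hτ1 hτ2
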